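/- In ℂ², let e₀, e₁ be the standard basis, and let e₊ = (e₀+e₁)/√2, e₋ = (e₀−e₁)/√2. On (ℂ²)^{⊗4} (qubits ordered 1,2,3,4) define the separable state ρ = (1/4)·(|e₀e₀⟩⟨e₀e₀| + |e₁e₁⟩⟨e₁e₁|)_{12} ⊗ (|e₊e₊⟩⟨e₊e₊| + |e₋e₋⟩⟨e₋e₋|)_{34}. Alice's measurement with input x = 0 is the projective measurement {|e₀⟩⟨e₀|, |e₁⟩⟨e₁|} on qubit 1, and with x = 1 it is {|e₊⟩⟨e₊|, |e₋⟩⟨e₋|} on qubit 3; Bob's measurement with y = 0 is {|e₀⟩⟨e₀|, |e₁⟩⟨e₁|} on qubit 2, and with y = 1 it is {|e₊⟩⟨e₊|, |e₋⟩⟨e₋|} on qubit 4 (identity on the remaining qubits), with outcome probabilities p(a,b|x,y) given by the Born rule p(a,b|x,y) = Tr[ρ·(Π^A_{a|x} ⊗ Π^B_{b|y})]. Then p(a = b | x = y) = 1 for both x = y = 0 and x = y = 1, and p(a,b|x,y) = 1/4 for all a,b whenever x ≠ y. -/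
import Mathlib


open Matrix
open scoped Kronecker

namespace BB84Separable

noncomputable def e0 : Fin 2 → ℂ := ![1, 0]
noncomputable def e1 : Fin 2 → ℂ := ![0, 1]
noncomputable def ep : Fin 2 → ℂ := ((Real.sqrt 2 : ℂ))⁻¹ • (e0 + e1)
noncomputable def em : Fin 2 → ℂ := ((Real.sqrt 2 : ℂ))⁻¹ • (e0 - e1)

/-- Rank-one projector |v⟩⟨v|. -/
noncomputable def proj (v : Fin 2 → ℂ) : Matrix (Fin 2) (Fin 2) ℂ :=
  vecMulVec v (star v)

/-- The computational (z) basis, indexed by the outcome. -/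
noncomputable def zvec : Fin 2 → Fin 2 → ℂ := ![e0, e1]
/-- The diagonal (x) basis, indexed by the outcome. -/
noncomputable def wvec : Fin 2 → Fin 2 → ℂ := ![ep, em]

/-- The four-qubit Hilbert space index (qubits ordered 1,2,3,4). -/
abbrev Q4 := (Fin 2 × Fin 2) × Fin 2 × Fin 2

/-- The separable four-qubit state
ρ = ¼ (|00⟩⟨00| + |11⟩⟨11|)₁₂ ⊗ (|++⟩⟨++| + |−−⟩⟨−−|)₃₄. -/
noncomputable def ρ : Matrix Q4 Q4 ℂ :=
  ((1 : ℂ) / 4) • ((proj e0 ⊗ₖ proj e0 + proj e1 ⊗ₖ proj e1)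
    ⊗ₖ (proj ep ⊗ₖ proj ep + proj em ⊗ₖ proj em))

/-- Alice's measurement projector for input `x` and outcome `a`:
for x = 0 the z-basis on qubit 1, for x = 1 the x-basis on qubit 3. -/
noncomputable def MA (x a : Fin 2) : Matrix Q4 Q4 ℂ :=
  if x = 0 then
    (proj (zvec a) ⊗ₖ (1 : Matrix (Fin 2) (Fin 2) ℂ))
      ⊗ₖ ((1 : Matrix (Fin 2) (Fin 2) ℂ) ⊗ₖ (1 : Matrix (Fin 2) (Fin 2) ℂ))
  else
    ((1 : Matrix (Fin 2) (Fin 2) ℂ) ⊗ₖ (1 : Matrix (Fin 2) (Fin 2) ℂ))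
      ⊗ₖ (proj (wvec a) ⊗ₖ (1 : Matrix (Fin 2) (Fin 2) ℂ))

/-- Bob's measurement projector for input `y` and outcome `b`:
for y = 0 the z-basis on qubit 2, for y = 1 the x-basis on qubit 4. -/
noncomputable def MB (y b : Fin 2) : Matrix Q4 Q4 ℂ :=
  if y = 0 then
    ((1 : Matrix (Fin 2) (Fin 2) ℂ) ⊗ₖ proj (zvec b))
      ⊗ₖ ((1 : Matrix (Fin 2) (Fin 2) ℂ) ⊗ₖ (1 : Matrix (Fin 2) (Fin 2) ℂ))
  else
    ((1 : Matrix (Fin 2) (Fin 2) ℂ) ⊗ₖ (1 : Matrix (Fin 2) (Fin 2) ℂ))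
      ⊗ₖ ((1 : Matrix (Fin 2) (Fin 2) ℂ) ⊗ₖ proj (wvec b))

/-- Born-rule outcome probabilities. -/
noncomputable def p (a b x y : Fin 2) : ℝ :=
  ((ρ * (MA x a * MB y b)).trace).re

lemma fin_one_eq_zero_eq_false : ((1 : Fin 2) = 0) = False := by decide

set_option maxHeartbeats 1600000 in
/-- the separable four-qubit state reproduces the BB84
correlations: perfect correlation for x = y, uniform 1/4 for x ≠ y. -/
theorem bb84_correlations_from_separable_state :
    (∑ a : Fin 2, p a a 0 0 = 1) ∧ (∑ a : Fin 2, p a a 1 1 = 1) ∧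
    (∀ a b : Fin 2, p a b 0 1 = 1 / 4) ∧ (∀ a b : Fin 2, p a b 1 0 = 1 / 4) := by
  refine ⟨?_, ?_, ?_, ?_⟩
  · rw [Fin.sum_univ_two]
    all_goals
      simp only [p, ρ, MA, MB, reduceIte, fin_one_eq_zero_eq_false, if_true, if_false, Matrix.smul_mul,
        Matrix.add_kronecker, Matrix.kronecker_add, Matrix.add_mul, Matrix.mul_add,
        ← Matrix.mul_kronecker_mul, Matrix.one_mul, Matrix.mul_one,
        Matrix.trace_smul, Matrix.trace_add, Matrix.trace_kronecker]
      simp [proj, vecMulVec, Matrix.trace, Matrix.mul_apply, Fin.sum_univ_two,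
        e0, e1, ep, em, zvec, wvec, Matrix.diag]
      norm_num [Complex.ext_iff, div_mul_div_comm, Real.mul_self_sqrt]
  · rw [Fin.sum_univ_two]
    all_goals
      simp only [p, ρ, MA, MB, reduceIte, fin_one_eq_zero_eq_false, if_true, if_false, Matrix.smul_mul,
        Matrix.add_kronecker, Matrix.kronecker_add, Matrix.add_mul, Matrix.mul_add,
        ← Matrix.mul_kronecker_mul, Matrix.one_mul, Matrix.mul_one,
        Matrix.trace_smul, Matrix.trace_add, Matrix.trace_kronecker]
      simp [proj, vecMulVec, Matrix.trace, Matrix.mul_apply, Fin.sum_univ_two,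
        e0, e1, ep, em, zvec, wvec, Matrix.diag]
      norm_num [Complex.ext_iff, div_mul_div_comm, Real.mul_self_sqrt]
  · intro a b; fin_cases a <;> fin_cases b
    all_goals
      simp only [p, ρ, MA, MB, reduceIte, fin_one_eq_zero_eq_false, if_true, if_false, Matrix.smul_mul,
        Matrix.add_kronecker, Matrix.kronecker_add, Matrix.add_mul, Matrix.mul_add,
        ← Matrix.mul_kronecker_mul, Matrix.one_mul, Matrix.mul_one,
        Matrix.trace_smul, Matrix.trace_add, Matrix.trace_kronecker]
      simp [proj, vecMulVec, Matrix.trace, Matrix.mul_apply, Fin.sum_univ_two,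
        e0, e1, ep, em, zvec, wvec, Matrix.diag]
      norm_num [Complex.ext_iff, div_mul_div_comm, Real.mul_self_sqrt]
  · intro a b; fin_cases a <;> fin_cases b
    all_goals
      simp only [p, ρ, MA, MB, reduceIte, fin_one_eq_zero_eq_false, if_true, if_false, Matrix.smul_mul,
        Matrix.add_kronecker, Matrix.kronecker_add, Matrix.add_mul, Matrix.mul_add,
        ← Matrix.mul_kronecker_mul, Matrix.one_mul, Matrix.mul_one,
        Matrix.trace_smul, Matrix.trace_add, Matrix.trace_kronecker]
      simp [proj, vecMulVec, Matrix.trace, Matrix.mul_apply, Fin.sum_univ_two,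
        e0, e1, ep, em, zvec, wvec, Matrix.diag]
      norm_num [Complex.ext_iff, div_mul_div_comm, Real.mul_self_sqrt]
end BB84Separable
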